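/- Let V : X → R≥0, and suppose along a sequence (x_k) in X with x_0 = x̂ we have V(x_{k+1}) − V(x_k) ≤ Cε − α(‖x_k‖) for all k, where α : R≥0 → R≥0 is continuous, strictly increasing, α(0)=0 and unbounded, and C, ε > 0. Then for every k, if ‖x_j‖ > α⁻¹(2Cε) for all j < k, then V(x_k) ≤ V(x_0) − k·Cε; consequently the set {x : ‖x‖ ≤ α⁻¹(2Cε)} is reached in at most ⌈V(x_0)/(Cε)⌉ steps. -/
import Mathlib


open Filter

/-- Quantitative practical-stability argument: if `V(x_{k+1}) − V(x_k) ≤ Cε − α(‖x_k‖)`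
with `V ≥ 0` and `α` a class-K∞ function, then as long as `α(‖x_j‖) > 2Cε` (i.e.
`‖x_j‖ > α⁻¹(2Cε)`) for all `j < k`, we have `V(x_k) ≤ V(x_0) − k·Cε`; consequently the
set `{x : α(‖x‖) ≤ 2Cε}` is reached in at most `⌈V(x_0)/(Cε)⌉` steps. -/
theorem stmt8 {E : Type*} [NormedAddCommGroup E]
    (V : E → ℝ) (hV : ∀ y, 0 ≤ V y) (x : ℕ → E)
    (α : ℝ → ℝ) (hα_mono : StrictMono α) (hα_cont : Continuous α)
    (hα0 : α 0 = 0) (hα_unbdd : Tendsto α atTop atTop)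
    (C ε : ℝ) (hC : 0 < C) (hε : 0 < ε)
    (hdec : ∀ k : ℕ, V (x (k + 1)) - V (x k) ≤ C * ε - α ‖x k‖) :
    (∀ k : ℕ, (∀ j < k, 2 * (C * ε) < α ‖x j‖) → V (x k) ≤ V (x 0) - k * (C * ε)) ∧
    ∃ j ≤ Nat.ceil (V (x 0) / (C * ε)), α ‖x j‖ ≤ 2 * (C * ε) := by
  have hCε : 0 < C * ε := mul_pos hC hε
  have main : ∀ k : ℕ, (∀ j < k, 2 * (C * ε) < α ‖x j‖) →
      V (x k) ≤ V (x 0) - k * (C * ε) := by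
    intro k
    induction k with
    | zero => intro _; simp
    | succ k ih =>
      intro h
      have hk := ih (fun j hj => h j (hj.trans (Nat.lt_succ_self k)))
      have hlast := h k (Nat.lt_succ_self k)
      have := hdec k
      push_cast
      nlinarith
  refine ⟨main, ?_⟩
  by_contra hcon
  push_neg at hcon
  set N := Nat.ceil (V (x 0) / (C * ε)) with hN
  have hall : ∀ j < N + 1, 2 * (C * ε) < α ‖x j‖ := by
    intro j hj
    exact hcon j (Nat.lt_succ_iff.mp hj)
  have h1 := main (N + 1) hall
  have h2 : V (x 0) / (C * ε) ≤ N := Nat.le_ceil _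
  have h3 : V (x 0) ≤ N * (C * ε) := by
    rwa [div_le_iff₀ hCε] at h2
  have := hV (x (N + 1))
  push_cast at h1
  nlinarith
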